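/- arXiv:1907.03024 — 2 statements merged into one kernel-verified Lean document; each statement's English description precedes it below -/
import Mathlib

section
/- Fix an integer n ≥ 2. Let f, h ∈ Homeo₊(ℝ), and suppose f has compact support. Suppose there exists a (not necessarily injective) group homomorphism φ from the subgroup of Homeo₊(ℝ) generated by BS(1,n) ∪ {f} into Homeo₊(ℝ) such that φ(γ) = γ for every γ ∈ BS(1,n) and φ(f) = h. Then either h is a translation, or for every x ∈ ℝ one has h(x) = x or h(x) = f(x). -/
open Set Topology

/-- The group of self-homeomorphisms of `X`, with `(f * g) x = f (g x)`. -/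
instance {X : Type*} [TopologicalSpace X] : Group (X ≃ₜ X) where
  mul f g := g.trans f
  one := Homeomorph.refl X
  inv := Homeomorph.symm
  mul_assoc _ _ _ := Homeomorph.ext fun _ => rfl
  one_mul _ := Homeomorph.ext fun _ => rfl
  mul_one _ := Homeomorph.ext fun _ => rfl
  inv_mul_cancel f := Homeomorph.ext fun x => f.symm_apply_apply x

/-- The support of a homeomorphism: the closure of the set of non-fixed points. -/
def Supp (f : ℝ ≃ₜ ℝ) : Set ℝ := closure {x | f x ≠ x}

/-- The homeomorphism `x ↦ n·x` of `ℝ`. -/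
noncomputable def dilation (n : ℕ) (hn : 2 ≤ n) : ℝ ≃ₜ ℝ :=
  Homeomorph.mulLeft₀ (n : ℝ) (by positivity)

/-- The homeomorphism `x ↦ x + t` of `ℝ`. -/
noncomputable def translation (t : ℝ) : ℝ ≃ₜ ℝ := Homeomorph.addRight t

/-- The standard affine Baumslag–Solitar group `BS(1,n)`, generated by `x ↦ n·x`
and `x ↦ x + 1`, as a subgroup of the homeomorphism group of `ℝ`. -/
noncomputable def BSgroup (n : ℕ) (hn : 2 ≤ n) : Subgroup (ℝ ≃ₜ ℝ) :=
  Subgroup.closure {dilation n hn, translation 1}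

/-!
Relations between `f` and its `BS(1,n)`-conjugates with disjoint supports also hold for `h`.
Applied to `f` and its far conjugates, they force `h` either to fix every point outside
`Supp f` or to have no fixed point: otherwise, contracting a large interval into a window that
`h` pushes up, or expanding strongly around the end of a gap between fixed points of `h`, gives
a far conjugate of `h` that does not commute with `h`.

If `h` fixes the complement of `Supp f` and `x < h x ≠ f x`, conjugating `f` into tiny
neighbourhoods of `x` and of `h x` produces two commuting elements whose images under `φ` do not
commute.

If `h` has no fixed point, the same dichotomy applied to `f⁻¹ (u f u⁻¹)` shows that each far
conjugate of `h` equals `h` or lies strictly on one side of it. For `U = h - id` this makes `U`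
bounded, monotone at large scale, and periodic with period its limit at one end; so `U` is
constant.
-/

open Function Filter

section Supp

variable {g k : ℝ ≃ₜ ℝ}

lemma apply_eq_self_of_notMem_Supp {x : ℝ} (hx : x ∉ Supp g) : g x = x :=
  not_not.1 fun h => hx (subset_closure h)

lemma Supp_subset_of_forall_notMem {B : Set ℝ} (hB : IsClosed B) (h : ∀ x ∉ B, g x = x) :
    Supp g ⊆ B :=
  closure_minimal (fun x hx => by_contra fun hxB => hx (h x hxB)) hB

lemma Supp_conj (u g : ℝ ≃ₜ ℝ) : Supp (u * g * u⁻¹) = u '' Supp g := by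
  rw [Supp, Supp, u.image_closure, u.image_eq_preimage_symm]
  congr 1
  ext x
  simp [u.eq_symm_apply]

lemma Supp_inv (g : ℝ ≃ₜ ℝ) : Supp g⁻¹ = Supp g := by
  simp only [Supp, Homeomorph.inv_apply, ne_eq, g.symm_apply_eq, eq_comm]

lemma Supp_mul_subset (g k : ℝ ≃ₜ ℝ) : Supp (g * k) ⊆ Supp g ∪ Supp k := by
  rw [Supp, Supp, Supp, ← closure_union]
  refine closure_mono fun x hx => ?_
  by_contra! h
  simp only [mem_union, mem_ofPred_eq, not_or, not_not] at h
  exact hx (by rw [Homeomorph.mul_apply, h.2, h.1])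

lemma eq_one_of_Supp_eq_empty (h : Supp g = ∅) : g = 1 :=
  Homeomorph.ext fun x => apply_eq_self_of_notMem_Supp (h ▸ Set.notMem_empty x)

lemma image_Supp_of_commute (h : Commute g k) : g '' Supp k = Supp k := by
  rw [← Supp_conj, h.eq, mul_inv_cancel_right]

lemma apply_mem_Supp {x : ℝ} (hx : x ∈ Supp g) : g x ∈ Supp g :=
  image_Supp_of_commute (Commute.refl g) ▸ mem_image_of_mem g hx

lemma commute_of_disjoint_Supp (h : Disjoint (Supp g) (Supp k)) : Commute g k := by
  refine Homeomorph.ext fun x => ?_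
  simp only [Homeomorph.mul_apply]
  by_cases hx : x ∈ Supp g
  · rw [apply_eq_self_of_notMem_Supp (h.notMem_of_mem_left hx),
      apply_eq_self_of_notMem_Supp (h.notMem_of_mem_left (apply_mem_Supp hx))]
  · rw [apply_eq_self_of_notMem_Supp hx]
    by_cases hk : x ∈ Supp k
    · rw [apply_eq_self_of_notMem_Supp (h.notMem_of_mem_right (apply_mem_Supp hk))]
    · rw [apply_eq_self_of_notMem_Supp hk, apply_eq_self_of_notMem_Supp hx]

lemma eq_one_of_commute_of_disjoint_image (h : Commute g k)
    (hd : Disjoint (Supp k) (g '' Supp k)) : k = 1 :=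
  eq_one_of_Supp_eq_empty (by simpa [image_Supp_of_commute h] using hd)

lemma image_fixedPoints_conj (u g : ℝ ≃ₜ ℝ) :
    u '' fixedPoints g = fixedPoints ⇑(u * g * u⁻¹) := by
  ext x
  simp [u.image_eq_preimage_symm, IsFixedPt, u.eq_symm_apply]

lemma image_fixedPoints_of_commute (h : Commute g k) : g '' fixedPoints k = fixedPoints k := by
  rw [image_fixedPoints_conj, h.eq, mul_inv_cancel_right]

lemma apply_sSup_eq_of_image_eq (hg : Monotone g) {Y : Set ℝ} (hY : g '' Y = Y)
    (hne : Y.Nonempty) (hbdd : BddAbove Y) : g (sSup Y) = sSup Y := by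
  rw [hg.map_csSup_of_continuousAt g.continuous.continuousAt hne hbdd, hY]

lemma eq_one_of_commute_of_lt (hg : StrictMono g) (hlt : ∀ x, x < g x) (h : Commute g k)
    (hk : BddAbove (Supp k)) : k = 1 := by
  by_contra hk1
  have hne : (Supp k).Nonempty :=
    Set.nonempty_iff_ne_empty.2 fun he => hk1 (eq_one_of_Supp_eq_empty he)
  have := apply_sSup_eq_of_image_eq hg.monotone (image_Supp_of_commute h) hne hk
  exact (hlt _).ne' this

lemma Homeomorph.strictMono_inv (hg : StrictMono g) : StrictMono ⇑g⁻¹ := fun a b hab =>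
  hg.lt_iff_lt.1 (by simpa using hab)

lemma forall_lt_or_forall_lt {a b : ℝ → ℝ} (ha : Continuous a) (hb : Continuous b)
    (h : ∀ x, a x ≠ b x) : (∀ x, a x < b x) ∨ ∀ x, b x < a x := by
  by_contra! H
  obtain ⟨⟨x, hx⟩, ⟨y, hy⟩⟩ := H
  obtain ⟨z, hz⟩ := intermediate_value_univ₂ ha hb hy hx
  exact h z hz

end Supp

section BaumslagSolitar

variable {n : ℕ}

def adicRationals (n : ℕ) : Set ℝ := {s | ∃ p : ℤ, ∃ m : ℕ, s = p / (n : ℝ) ^ m}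

lemma natCast_mem_adicRationals (k : ℕ) : (k : ℝ) ∈ adicRationals n := ⟨k, 0, by simp⟩

lemma neg_mem_adicRationals {s : ℝ} (hs : s ∈ adicRationals n) : -s ∈ adicRationals n := by
  obtain ⟨p, m, rfl⟩ := hs
  exact ⟨-p, m, by push_cast; ring⟩

lemma dense_adicRationals (hn : 1 < n) : Dense (adicRationals n) := by
  refine dense_of_exists_between fun a b hab => ?_
  obtain ⟨m, hm⟩ := pow_unbounded_of_one_lt (1 / (b - a)) (by exact_mod_cast hn : (1 : ℝ) < n)
  have hpos : (0 : ℝ) < (n : ℝ) ^ m := pow_pos (by exact_mod_cast (by omega : 0 < n)) m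
  have hgap : 1 < (b - a) * (n : ℝ) ^ m := by
    rwa [div_lt_iff₀ (sub_pos.2 hab), mul_comm] at hm
  refine ⟨((⌊a * (n : ℝ) ^ m⌋ + 1 : ℤ) : ℝ) / (n : ℝ) ^ m, ⟨_, m, rfl⟩, ?_, ?_⟩
  · rw [lt_div_iff₀ hpos]
    push_cast
    exact Int.lt_floor_add_one _
  · rw [div_lt_iff₀ hpos]
    push_cast
    nlinarith [Int.floor_le (a * (n : ℝ) ^ m)]

lemma exists_nat_mul_eq_nat_mul (hn : 0 < n) {s₁ s₂ : ℝ} (h₁ : s₁ ∈ adicRationals n)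
    (h₂ : s₂ ∈ adicRationals n) (hs₁ : 0 < s₁) (hs₂ : 0 < s₂) :
    ∃ k₁ k₂ : ℕ, 0 < k₁ ∧ 0 < k₂ ∧ (k₁ : ℝ) * s₁ = k₂ * s₂ := by
  obtain ⟨p₁, m₁, rfl⟩ := h₁
  obtain ⟨p₂, m₂, rfl⟩ := h₂
  have hp₁ : 0 < p₁ := by exact_mod_cast (div_pos_iff_of_pos_right (by positivity)).1 hs₁
  have hp₂ : 0 < p₂ := by exact_mod_cast (div_pos_iff_of_pos_right (by positivity)).1 hs₂
  lift p₁ to ℕ using hp₁.le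
  lift p₂ to ℕ using hp₂.le
  refine ⟨p₂ * n ^ m₁, p₁ * n ^ m₂, Nat.mul_pos (by omega) (pow_pos hn _),
    Nat.mul_pos (by omega) (pow_pos hn _), ?_⟩
  push_cast
  field_simp

variable {hn : 2 ≤ n}

lemma natCast_pos_of_two_le (hn : 2 ≤ n) : (0 : ℝ) < n := by exact_mod_cast (by omega : 0 < n)

lemma dilation_zpow_apply (j : ℤ) (x : ℝ) : (dilation n hn ^ j) x = (n : ℝ) ^ j * x := by
  have hn0 := (natCast_pos_of_two_le hn).ne'
  induction j using Int.induction_on generalizing x with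
  | zero => simp
  | succ j ih =>
    rw [zpow_add_one, Homeomorph.mul_apply, ih, zpow_add_one₀ hn0]
    simp only [dilation, Homeomorph.coe_mulLeft₀]
    ring
  | pred j ih =>
    rw [zpow_sub_one, Homeomorph.mul_apply, ih, zpow_sub_one₀ hn0]
    simp only [dilation, Homeomorph.inv_apply, Homeomorph.mulLeft₀_symm_apply]
    ring

lemma translation_one_zpow_apply (p : ℤ) (x : ℝ) : (translation 1 ^ p) x = x + p := by
  induction p using Int.induction_on generalizing x with
  | zero => simp
  | succ p ih =>
    rw [zpow_add_one, Homeomorph.mul_apply, ih]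
    simp only [translation, Homeomorph.coe_addRight]
    push_cast
    ring
  | pred p ih =>
    rw [zpow_sub_one, Homeomorph.mul_apply, ih, Homeomorph.inv_apply]
    simp only [translation, Homeomorph.addRight_symm, Homeomorph.coe_addRight]
    push_cast
    ring

lemma translation_mem_BSgroup {s : ℝ} (hs : s ∈ adicRationals n) :
    translation s ∈ BSgroup n hn := by
  obtain ⟨p, m, rfl⟩ := hs
  have hd : dilation n hn ∈ BSgroup n hn := Subgroup.subset_closure (by simp)
  have ht : translation 1 ∈ BSgroup n hn := Subgroup.subset_closure (by simp)
  have hn0 := (natCast_pos_of_two_le hn).ne'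
  have : translation (p / (n : ℝ) ^ m) =
      dilation n hn ^ (-(m : ℤ)) * translation 1 ^ p * dilation n hn ^ (m : ℤ) := by
    ext x
    simp only [Homeomorph.mul_apply, dilation_zpow_apply, translation_one_zpow_apply]
    simp only [translation, Homeomorph.coe_addRight, zpow_neg, zpow_natCast]
    field_simp
  rw [this]
  exact mul_mem (mul_mem (zpow_mem hd _) (zpow_mem ht _)) (zpow_mem hd _)

noncomputable def affineHomeo (n : ℕ) (hn : 2 ≤ n) (j : ℤ) (s : ℝ) : ℝ ≃ₜ ℝ :=
  translation s * dilation n hn ^ j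

lemma affineHomeo_apply (j : ℤ) (s x : ℝ) : affineHomeo n hn j s x = (n : ℝ) ^ j * x + s := by
  simp [affineHomeo, dilation_zpow_apply, translation]

lemma affineHomeo_mem {j : ℤ} {s : ℝ} (hs : s ∈ adicRationals n) :
    affineHomeo n hn j s ∈ BSgroup n hn :=
  mul_mem (translation_mem_BSgroup hs) (zpow_mem (Subgroup.subset_closure (by simp)) j)

lemma strictMono_affineHomeo (j : ℤ) (s : ℝ) : StrictMono (affineHomeo n hn j s) := by
  have := zpow_pos (natCast_pos_of_two_le hn) j
  intro a b hab
  simp only [affineHomeo_apply]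
  gcongr

lemma conj_apply_affineHomeo (g : ℝ ≃ₜ ℝ) (j : ℤ) (s x : ℝ) :
    (affineHomeo n hn j s * g * (affineHomeo n hn j s)⁻¹) x =
      (n : ℝ) ^ j * g ((x - s) / (n : ℝ) ^ j) + s := by
  have hl := (zpow_pos (natCast_pos_of_two_le hn) j).ne'
  conv_lhs => rw [show x = affineHomeo n hn j s ((x - s) / (n : ℝ) ^ j) by
    rw [affineHomeo_apply]; field_simp; ring]
  rw [Homeomorph.mul_apply, Homeomorph.mul_apply, Homeomorph.inv_apply,
    Homeomorph.symm_apply_apply, affineHomeo_apply]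

end BaumslagSolitar

section Placement

variable {n : ℕ}

lemma exists_zpow_lt (hn : 2 ≤ n) {ε : ℝ} (hε : 0 < ε) : ∃ j : ℤ, (n : ℝ) ^ j < ε := by
  obtain ⟨k, hk⟩ := exists_pow_lt_of_lt_one hε
    (inv_lt_one_of_one_lt₀ (by exact_mod_cast (by omega : 1 < n) : (1 : ℝ) < n))
  exact ⟨-k, by rwa [zpow_neg, zpow_natCast, ← inv_pow]⟩

lemma exists_mem_BSgroup_straddle (hn : 2 ≤ n) {x y : ℝ} (hxy : x < y) (R : ℝ) {ε : ℝ}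
    (hε : 0 < ε) : ∃ v ∈ BSgroup n hn, StrictMono v ∧ ∃ r > 0, v x < y - r ∧ y + r < v y ∧
      v '' Icc (-R) R ⊆ Metric.ball y ε := by
  have hd : 0 < y - x := sub_pos.2 hxy
  have hR : 0 < |R| + |(x + y) / 2| + (y - x) := by positivity
  obtain ⟨j, hj⟩ := exists_zpow_lt hn (div_pos hε hR)
  have hl : 0 < (n : ℝ) ^ j := zpow_pos (natCast_pos_of_two_le hn) j
  rw [lt_div_iff₀ hR] at hj
  obtain ⟨s, hs, hs₁, hs₂⟩ := (dense_adicRationals (n := n) (by omega)).exists_between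
    (show y - (n : ℝ) ^ j * ((x + y) / 2) - (n : ℝ) ^ j * (y - x) / 4 <
      y - (n : ℝ) ^ j * ((x + y) / 2) + (n : ℝ) ^ j * (y - x) / 4 by nlinarith)
  refine ⟨affineHomeo n hn j s, affineHomeo_mem hs, strictMono_affineHomeo j s,
    (n : ℝ) ^ j * (y - x) / 4, by positivity, ?_, ?_, ?_⟩
  · rw [affineHomeo_apply]; nlinarith
  · rw [affineHomeo_apply]; nlinarith
  · rintro _ ⟨b, hb, rfl⟩
    rw [Metric.mem_ball, Real.dist_eq, affineHomeo_apply]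
    have hb' : |b - (x + y) / 2| ≤ |R| + |(x + y) / 2| :=
      (abs_sub _ _).trans (add_le_add_left ((abs_le.2 hb).trans (le_abs_self R)) _)
    have hs' : |(n : ℝ) ^ j * ((x + y) / 2) + s - y| < (n : ℝ) ^ j * (y - x) / 4 :=
      abs_sub_lt_iff.2 ⟨by linarith, by linarith⟩
    calc |(n : ℝ) ^ j * b + s - y|
        = |(n : ℝ) ^ j * (b - (x + y) / 2) + ((n : ℝ) ^ j * ((x + y) / 2) + s - y)| := by ring_nf
      _ ≤ (n : ℝ) ^ j * |b - (x + y) / 2| + |(n : ℝ) ^ j * ((x + y) / 2) + s - y| := by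
        rw [← abs_of_pos hl, ← abs_mul, abs_of_pos hl]; exact abs_add_le _ _
      _ < ε := by nlinarith

lemma exists_mem_BSgroup_stretch (hn : 2 ≤ n) {α β R : ℝ} (hαβ : α < β) (hRβ : R < β) :
    ∃ u ∈ BSgroup n hn, StrictMono u ∧ u β ∈ Ioo α β ∧ u α < α ∧ ∀ b ≤ R, u b < -R := by
  obtain ⟨k, hk⟩ := pow_unbounded_of_one_lt (max 1 ((β + R) / (β - R)))
    (by exact_mod_cast (by omega : 1 < n) : (1 : ℝ) < n)
  rw [max_lt_iff, div_lt_iff₀ (sub_pos.2 hRβ)] at hk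
  obtain ⟨s, hs, hs₁, hs₂⟩ := (dense_adicRationals (n := n) (by omega)).exists_between
    (show α - (n : ℝ) ^ k * β < β - (n : ℝ) ^ k * β by linarith)
  refine ⟨affineHomeo n hn k s, affineHomeo_mem hs, strictMono_affineHomeo _ _, ?_, ?_, ?_⟩
  · simp only [affineHomeo_apply, zpow_natCast]
    exact ⟨by linarith, by linarith⟩
  · simp only [affineHomeo_apply, zpow_natCast]
    nlinarith
  · intro b hb
    simp only [affineHomeo_apply, zpow_natCast]
    nlinarith

lemma disjoint_image_affineHomeo {hn : 2 ≤ n} {S : Set ℝ} {M : ℝ} (hS : S ⊆ Icc (-M) M) {j : ℤ}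
    {s : ℝ} (hs : ((n : ℝ) ^ j + 1) * M < |s|) : Disjoint S (affineHomeo n hn j s '' S) := by
  rw [Set.disjoint_left]
  rintro _ hx ⟨b, hb, rfl⟩
  rw [affineHomeo_apply] at hx
  have hl := zpow_pos (natCast_pos_of_two_le hn) j
  obtain ⟨h₁, h₂⟩ := hS hx
  obtain ⟨h₃, h₄⟩ := hS hb
  exact hs.not_ge (abs_le.2 ⟨by nlinarith, by nlinarith⟩)

end Placement

lemma IsCompact.exists_subset_Icc {B : Set ℝ} (hB : IsCompact B) : ∃ R > 0, B ⊆ Icc (-R) R := by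
  obtain ⟨R, hR, hBR⟩ := hB.isBounded.subset_closedBall_lt 0 0
  exact ⟨R, hR, by simpa [Real.closedBall_eq_Icc] using hBR⟩

lemma exists_Ioo_subset_compl {F : Set ℝ} (hF : IsClosed F) {z : ℝ} (hz : z ∉ F)
    (hbelow : (F ∩ Iic z).Nonempty) (habove : (F ∩ Ici z).Nonempty) :
    ∃ α ∈ F, ∃ β ∈ F, z ∈ Ioo α β ∧ Ioo α β ⊆ Fᶜ := by
  have hα := (hF.inter isClosed_Iic).csSup_mem hbelow ⟨z, fun _ h => h.2⟩
  have hβ := (hF.inter isClosed_Ici).csInf_mem habove ⟨z, fun _ h => h.2⟩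
  refine ⟨_, hα.1, _, hβ.1, ⟨lt_of_le_of_ne hα.2 fun h => hz (h ▸ hα.1),
    lt_of_le_of_ne hβ.2 fun h => hz (h ▸ hβ.1)⟩, fun w hw hwF => ?_⟩
  rcases le_total w z with hwz | hzw
  · exact hw.1.not_ge (le_csSup ⟨z, fun _ h => h.2⟩ ⟨hwF, hwz⟩)
  · exact hw.2.not_ge (csInf_le ⟨z, fun _ h => h.2⟩ ⟨hwF, hzw⟩)

section Dichotomy

variable {n : ℕ} {hn : 2 ≤ n} {B : Set ℝ} {g : ℝ ≃ₜ ℝ}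

/-- Shrinking `[-R, R]` into the ball would put `sSup (u '' X)` into the ball, where it would be
a fixed point of `g`. -/
lemma not_bddAbove_of_image_eq (hg : StrictMono g) {R x₀ δ : ℝ} (hB : B ⊆ Icc (-R) R)
    (hδ : 0 < δ) (hball : Metric.ball x₀ δ ⊆ Bᶜ ∩ {y | y < g y}) {X : Set ℝ} (hX : X.Nonempty)
    (hinv : ∀ u ∈ BSgroup n hn, Disjoint B (u '' B) → g '' (u '' X) = u '' X) :
    ¬ BddAbove X := by
  intro hbdd
  obtain ⟨u, hu, humono, -, -, -, -, hsub⟩ := exists_mem_BSgroup_straddle hn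
    (sub_one_lt x₀) (max R |sSup X|) hδ
  have hBu : u '' B ⊆ Metric.ball x₀ δ :=
    (image_mono (hB.trans (Icc_subset_Icc (neg_le_neg (le_max_left _ _)) (le_max_left _ _)))).trans
      hsub
  have hdisj : Disjoint B (u '' B) :=
    Set.disjoint_right.2 fun y hy => (hball (hBu hy)).1
  have hfix := apply_sSup_eq_of_image_eq hg.monotone (hinv u hu hdisj) (hX.image u)
    (humono.monotone.map_bddAbove hbdd)
  rw [← humono.monotone.map_csSup_of_continuousAt u.continuous.continuousAt hX hbdd] at hfix
  have hmem : u (sSup X) ∈ Metric.ball x₀ δ :=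
    hsub ⟨_, abs_le.1 (le_max_right _ _), rfl⟩
  exact (hball hmem).2.ne' hfix

/-- The moved set and the fixed set of `g` are unbounded above, so `g` has a gap `(α, β)`
between fixed points to the right of `B`; a strong expansion `u` with `u β ∈ (α, β)` then
produces a fixed point inside the gap. -/
lemma false_of_lt_of_apply_eq (hB : IsCompact B) (hg : StrictMono g)
    (hcomm : ∀ u ∈ BSgroup n hn, Disjoint B (u '' B) → Commute g (u * g * u⁻¹))
    {x₀ q : ℝ} (hx₀B : x₀ ∉ B) (hx₀ : x₀ < g x₀) (hq : g q = q) : False := by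
  obtain ⟨R, -, hR⟩ := hB.exists_subset_Icc
  obtain ⟨δ, hδ, hball⟩ := Metric.isOpen_iff.1
    (hB.isClosed.isOpen_compl.inter (isOpen_lt continuous_id g.continuous)) x₀ ⟨hx₀B, hx₀⟩
  have hinv : ∀ u ∈ BSgroup n hn, Disjoint B (u '' B) →
      g '' (u '' fixedPoints g) = u '' fixedPoints g := fun u hu hd => by
    rw [image_fixedPoints_conj, image_fixedPoints_of_commute (hcomm u hu hd)]
  have hfix : ¬ BddAbove (fixedPoints g) :=
    not_bddAbove_of_image_eq hg hR hδ hball ⟨q, hq⟩ hinv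
  have hmoved : ¬ BddAbove (fixedPoints g)ᶜ :=
    not_bddAbove_of_image_eq hg hR hδ hball ⟨x₀, hx₀.ne'⟩ fun u hu hd => by
      rw [image_compl_eq u.bijective, image_compl_eq g.bijective, hinv u hu hd]
  obtain ⟨z, hz, hzR⟩ := not_bddAbove_iff.1 hmoved (max R q)
  obtain ⟨p, hp, hzp⟩ := not_bddAbove_iff.1 hfix z
  obtain ⟨α, hα, β, hβ, hzαβ, hgap⟩ := exists_Ioo_subset_compl (isClosed_eq g.continuous
    continuous_id) hz ⟨q, hq, (le_max_right _ _).trans hzR.le⟩ ⟨p, hp, hzp.le⟩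
  obtain ⟨u, hu, humono, huβ, huα, huB⟩ := exists_mem_BSgroup_stretch hn
    (hzαβ.1.trans hzαβ.2) (((le_max_left _ _).trans_lt hzR).trans hzαβ.2)
  have hd : Disjoint B (u '' B) := Set.disjoint_right.2 fun _ ⟨b, hb, hbu⟩ hbB =>
    (hbu ▸ huB b (hR hb).2).not_ge (hR hbB).1
  -- `u '' fixedPoints g` is `g`-invariant and contains `u β`, so it meets `(α, u β)`
  have hY := hinv u hu hd
  have huβY : u β ∈ u '' fixedPoints g := ⟨β, hβ, rfl⟩
  obtain ⟨q', hq'Y, hαq', hq'β⟩ : ∃ q' ∈ u '' fixedPoints g, α < q' ∧ q' < u β := by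
    rcases (show g (u β) ≠ u β from hgap huβ).lt_or_gt with hlt | hgt
    · refine ⟨g (u β), hY ▸ mem_image_of_mem g huβY, ?_, hlt⟩
      rw [← show g α = α from hα]
      exact hg huβ.1
    · obtain ⟨p', hp'Y, hp'⟩ := hY.symm ▸ huβY
      refine ⟨p', hp'Y, hg.lt_iff_lt.1 ?_, hg.lt_iff_lt.1 (hp' ▸ hgt)⟩
      rw [hp', show g α = α from hα]
      exact huβ.1
  obtain ⟨p'', hp'', rfl⟩ := hq'Y
  exact hgap ⟨humono.lt_iff_lt.1 (huα.trans hαq'), humono.lt_iff_lt.1 hq'β⟩ hp''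

theorem forall_notMem_apply_eq_or_forall_apply_ne (hB : IsCompact B) (hg : StrictMono g)
    (hcomm : ∀ u ∈ BSgroup n hn, Disjoint B (u '' B) → Commute g (u * g * u⁻¹)) :
    (∀ x ∉ B, g x = x) ∨ ∀ x, g x ≠ x := by
  by_contra! ⟨⟨x₀, hx₀B, hx₀⟩, ⟨q, hq⟩⟩
  rcases hx₀.lt_or_gt with hlt | hgt
  · refine false_of_lt_of_apply_eq (n := n) (hn := hn) hB (Homeomorph.strictMono_inv hg)
      (fun u hu hd => ?_) hx₀B ?_ (g.symm_apply_eq.2 hq.symm)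
    · simpa [mul_assoc] using (hcomm u hu hd).inv_inv
    · simpa using Homeomorph.strictMono_inv hg hlt
  · exact false_of_lt_of_apply_eq hB hg hcomm hx₀B hgt hq

end Dichotomy

section RealFunctions

variable {n : ℕ} {U : ℝ → ℝ} {C : ℝ}

lemma bddAbove_range_of_lt_mul (hn : 1 < n) (hU : Continuous U)
    (h : ∀ s ∈ adicRationals n, C < |s| → ∀ y, U (n * y + s) < n * U y) : BddAbove (range U) := by
  have hn0 : (0 : ℝ) < n := by exact_mod_cast (by omega : 0 < n)
  obtain ⟨B₁, hB₁⟩ := (isCompact_Icc (a := (0 : ℝ)) (b := 1)).bddAbove_image hU.continuousOn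
  obtain ⟨B₂, hB₂⟩ := (isCompact_Icc (a := -(C + n)) (b := C + n)).bddAbove_image hU.continuousOn
  refine ⟨max (n * B₁) B₂, ?_⟩
  rintro _ ⟨x, rfl⟩
  by_cases hx : |x| ≤ C + n
  · exact (hB₂ ⟨x, abs_le.1 hx, rfl⟩).trans (le_max_right _ _)
  obtain ⟨s, hs, hs₁, hs₂⟩ := (dense_adicRationals hn).exists_between (sub_lt_self x hn0)
  have hy : (x - s) / n ∈ Icc (0 : ℝ) 1 :=
    ⟨div_nonneg (by linarith) hn0.le, (div_le_one hn0).2 (by linarith)⟩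
  have hfar : C < |s| := by
    have := abs_sub_abs_le_abs_sub x s
    rw [abs_of_pos (sub_pos.2 hs₂)] at this
    linarith
  have := h s hs hfar ((x - s) / n)
  rw [mul_div_cancel₀ _ hn0.ne', sub_add_cancel] at this
  exact this.le.trans ((mul_le_mul_of_nonneg_left (hB₁ ⟨_, hy, rfl⟩) hn0.le).trans
    (le_max_left _ _))

lemma apply_add_nat_mul_lt {s : ℝ} (h : ∀ y, U (y + s) < U y) {k : ℕ} (hk : 0 < k) (y : ℝ) :
    U (y + k * s) < U y := by
  have : StrictAnti fun k : ℕ => U (y + k * s) := strictAnti_nat_of_succ_lt fun k => by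
    simpa [add_mul, add_assoc] using h (y + k * s)
  simpa using this hk

/-- Two positive elements of `ℤ[1/n]` have a common multiple, so `U (· + s) < U` for one of
them rules out `U < U (· + s)` for the other. -/
lemma forall_le_or_forall_ge_of_trichotomy (hn : 0 < n) (hC : 0 ≤ C)
    (htri : ∀ s ∈ adicRationals n, C < s →
      (∀ y, U (y + s) = U y) ∨ (∀ y, U y < U (y + s)) ∨ (∀ y, U (y + s) < U y)) :
    (∀ s ∈ adicRationals n, C < s → ∀ y, U y ≤ U (y + s)) ∨
      (∀ s ∈ adicRationals n, C < s → ∀ y, U (y + s) ≤ U y) := by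
  by_contra! ⟨⟨s₁, hs₁, hC₁, y₁, h₁⟩, ⟨s₂, hs₂, hC₂, y₂, h₂⟩⟩
  have hdec : ∀ y, U (y + s₁) < U y := by
    rcases htri s₁ hs₁ hC₁ with h | h | h
    · exact absurd (h y₁) h₁.ne
    · exact absurd (h y₁) h₁.not_gt
    · exact h
  have hinc : ∀ y, -U (y + s₂) < -U y := by
    rcases htri s₂ hs₂ hC₂ with h | h | h
    · exact absurd (h y₂) h₂.ne'
    · exact fun y => neg_lt_neg (h y)
    · exact absurd (h y₂) h₂.not_gt
  obtain ⟨k₁, k₂, hk₁, hk₂, hk⟩ :=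
    exists_nat_mul_eq_nat_mul hn hs₁ hs₂ (hC.trans_lt hC₁) (hC.trans_lt hC₂)
  have h₁' := apply_add_nat_mul_lt hdec hk₁ 0
  have h₂' := apply_add_nat_mul_lt (U := fun y => -U y) hinc hk₂ 0
  rw [hk] at h₁'
  linarith

lemma apply_le_apply_add_of_dense {D : Set ℝ} (hD : Dense D) (hU : Continuous U)
    (h : ∀ s ∈ D, C < s → ∀ y, U y ≤ U (y + s)) {t : ℝ} (ht : C < t) (y : ℝ) :
    U y ≤ U (y + t) :=
  closure_minimal (t := {t | U y ≤ U (y + t)}) (fun s hs => h s hs.2 hs.1 y)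
    (isClosed_le continuous_const (hU.comp (continuous_const.add continuous_id)))
    (hD.open_subset_closure_inter isOpen_Ioi ht)

lemma tendsto_atTop_ciSup_of_le_add (hbdd : BddAbove (range U))
    (h : ∀ y t, C < t → U y ≤ U (y + t)) : Tendsto U atTop (𝓝 (⨆ y, U y)) := by
  refine tendsto_order.2
    ⟨fun a ha => ?_, fun a ha => .of_forall fun y => (le_ciSup hbdd y).trans_lt ha⟩
  obtain ⟨y₀, hy₀⟩ := exists_lt_of_lt_ciSup ha
  filter_upwards [eventually_gt_atTop (y₀ + C)] with y hy
  simpa using hy₀.trans_le (h y₀ (y - y₀) (by linarith))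

lemma forall_eq_of_periodic (h : ∀ y t, C < t → U y ≤ U (y + t)) {a : ℝ} (ha : 0 < a)
    (hper : Periodic U a) (x y : ℝ) : U x = U y := by
  suffices key : ∀ x y, U x ≤ U y from le_antisymm (key x y) (key y x)
  intro x y
  obtain ⟨k, hk⟩ := exists_nat_gt ((C + x - y) / a)
  rw [div_lt_iff₀ ha] at hk
  calc U x ≤ U (x + (y + k * a - x)) := h x _ (by linarith)
    _ = U y := by rw [add_sub_cancel]; exact (hper.nat_mul k) y

lemma apply_add_eq_of_tendsto {H : ℝ → ℝ} (hH : Continuous H) {l : Filter ℝ} {a : ℝ}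
    {s : ℕ → ℝ} (hs : ∀ y, Tendsto (fun k => y - s k) atTop l)
    (hcomm : ∀ k x, H (H (x - s k) + s k) = H (H x - s k) + s k)
    (hlim : Tendsto (fun y => H y - y) l (𝓝 a)) (x : ℝ) : H (x + a) = H x + a := by
  have h₁ : Tendsto (fun k => H (H (x - s k) + s k)) atTop (𝓝 (H (x + a))) := by
    refine (hH.tendsto _).comp ((tendsto_const_nhds.add (hlim.comp (hs x))).congr fun k => ?_)
    simp only [comp_apply]
    ring
  have h₂ : Tendsto (fun k => H (H x - s k) + s k) atTop (𝓝 (H x + a)) := by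
    refine (tendsto_const_nhds.add (hlim.comp (hs (H x)))).congr fun k => ?_
    simp only [comp_apply]
    ring
  exact tendsto_nhds_unique (h₁.congr fun k => hcomm k x) h₂

end RealFunctions

section Rigidity

variable {H : ℝ → ℝ} {C : ℝ}

lemma forall_sub_eq_of_le_add (hH : Continuous H) (hlt : ∀ x, x < H x)
    (hbdd : BddAbove (range fun y => H y - y))
    (hmono : ∀ y t, C < t → H y - y ≤ H (y + t) - (y + t)) {s : ℕ → ℝ}
    (hs : ∀ y, Tendsto (fun k => y - s k) atTop atTop)
    (hcomm : ∀ k x, H (H (x - s k) + s k) = H (H x - s k) + s k) (x : ℝ) :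
    H x - x = H 0 - 0 := by
  have hper := apply_add_eq_of_tendsto hH hs hcomm (tendsto_atTop_ciSup_of_le_add hbdd hmono)
  exact forall_eq_of_periodic hmono ((sub_pos.2 (hlt 0)).trans_le (le_ciSup hbdd 0))
    (fun y => by linarith [hper y]) x 0

lemma forall_sub_eq_of_add_le (hH : Continuous H) (hlt : ∀ x, x < H x)
    (hbdd : BddAbove (range fun y => H y - y))
    (hmono : ∀ y t, C < t → H (y + t) - (y + t) ≤ H y - y) {s : ℕ → ℝ}
    (hs : ∀ y, Tendsto (fun k => y - s k) atTop atBot)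
    (hcomm : ∀ k x, H (H (x - s k) + s k) = H (H x - s k) + s k) (x : ℝ) :
    H x - x = H 0 - 0 := by
  set W := fun y => H (-y) - -y
  have hmonoW : ∀ y t, C < t → W y ≤ W (y + t) := fun y t ht => by
    have := hmono (-(y + t)) t ht
    rwa [show -(y + t) + t = -y by ring] at this
  have hbddW : BddAbove (range W) := hbdd.mono (by rintro _ ⟨y, rfl⟩; exact ⟨-y, rfl⟩)
  set a := ⨆ y, W y
  have hper := apply_add_eq_of_tendsto hH hs hcomm
    (((tendsto_atTop_ciSup_of_le_add hbddW hmonoW).comp tendsto_neg_atBot_atTop).congr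
      fun y => by simp only [W, comp_apply, neg_neg])
  have hperW : Periodic W a := fun y => by
    have := hper (-(y + a))
    rw [show -(y + a) + a = -y by ring] at this
    simp only [W]
    linarith
  have hW0 : 0 < W 0 := by simp only [W, neg_zero, sub_zero]; linarith [hlt 0]
  have := forall_eq_of_periodic hmonoW (hW0.trans_le (le_ciSup hbddW 0)) hperW (-x) 0
  simp only [W, neg_neg, neg_zero] at this
  exact this

/-- `hdil` bounds `H y - y`; `htri` makes it monotone at large scale, hence convergent at one
end, and `hcomm` then makes it periodic with the limit as period. -/
theorem exists_forall_eq_add {n : ℕ} (hn : 1 < n) (hH : Continuous H) (hlt : ∀ x, x < H x)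
    (hC : 0 ≤ C) (hdil : ∀ s ∈ adicRationals n, C < |s| → ∀ y, H (n * y + s) < n * H y + s)
    (htri : ∀ s ∈ adicRationals n, C < |s| →
      (∀ y, H (y + s) = H y + s) ∨ (∀ y, H y + s < H (y + s)) ∨ (∀ y, H (y + s) < H y + s))
    (hcomm : ∀ s ∈ adicRationals n, C < |s| → ∀ x, H (H (x - s) + s) = H (H x - s) + s) :
    ∃ t, ∀ x, H x = x + t := by
  set U : ℝ → ℝ := fun y => H y - y
  have hU : Continuous U := hH.sub continuous_id
  have hbdd : BddAbove (range U) := bddAbove_range_of_lt_mul hn hU fun s hs hfar y => by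
    simp only [U]; linarith [hdil s hs hfar y]
  suffices hconst : ∀ x, U x = U 0 from ⟨U 0, fun x => by linarith [hconst x]⟩
  obtain ⟨K, hK⟩ := exists_nat_gt C
  have hfar : ∀ k : ℕ, C < |((k + K : ℕ) : ℝ)| := fun k => by
    rw [Nat.abs_cast]; push_cast; linarith [k.cast_nonneg (α := ℝ)]
  rcases forall_le_or_forall_ge_of_trichotomy (U := U) (by omega) hC fun s hs hCs =>
    (htri s hs (hCs.trans_le (le_abs_self s))).imp (fun h y => by simp only [U]; linarith [h y])
      (Or.imp (fun h y => by simp only [U]; linarith [h y])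
        (fun h y => by simp only [U]; linarith [h y])) with hinc | hdec
  · refine forall_sub_eq_of_le_add hH hlt hbdd
      (fun y t ht => apply_le_apply_add_of_dense (dense_adicRationals hn) hU hinc ht y)
      (s := fun k => -((k + K : ℕ) : ℝ)) (fun y => ?_) (fun k x => ?_)
    · exact (tendsto_atTop_add_const_left _ (y + K) tendsto_natCast_atTop_atTop).congr
        fun k => by push_cast; ring
    · exact hcomm _ (neg_mem_adicRationals (natCast_mem_adicRationals _))
        (by rw [abs_neg]; exact hfar k) x
  · refine forall_sub_eq_of_add_le (C := C) hH hlt hbdd (fun y t ht => ?_)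
      (s := fun k => ((k + K : ℕ) : ℝ)) (fun y => ?_) (fun k x => hcomm _
        (natCast_mem_adicRationals _) (hfar k) x)
    · exact neg_le_neg_iff.1 (apply_le_apply_add_of_dense (U := fun y => -U y)
        (dense_adicRationals hn) hU.neg (fun s hs hCs y => neg_le_neg (hdec s hs hCs y)) ht y)
    · exact (tendsto_atBot_add_const_left _ (y - K)
        (tendsto_neg_atTop_atBot.comp tendsto_natCast_atTop_atTop)).congr fun k => by
          simp only [comp_apply]; push_cast; ring

end Rigidity

section Transfer

variable {n : ℕ} {hn : 2 ≤ n} {K : Subgroup (ℝ ≃ₜ ℝ)} {φ : K →* ℝ ≃ₜ ℝ}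

lemma commute_map_of_disjoint_Supp {X Y : K} (h : Disjoint (Supp X) (Supp Y)) :
    Commute (φ X) (φ Y) :=
  (show Commute X Y from Subtype.ext (commute_of_disjoint_Supp h).eq).map φ

lemma map_conj (hK : BSgroup n hn ≤ K) (hφ : ∀ γ (hγ : γ ∈ BSgroup n hn), φ ⟨γ, hK hγ⟩ = γ)
    {u : ℝ ≃ₜ ℝ} (hu : u ∈ BSgroup n hn) (X : K) :
    φ (⟨u, hK hu⟩ * X * ⟨u, hK hu⟩⁻¹) = u * φ X * u⁻¹ := by
  rw [map_mul, map_mul, map_inv, hφ u hu]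

lemma commute_map_conj (hK : BSgroup n hn ≤ K)
    (hφ : ∀ γ (hγ : γ ∈ BSgroup n hn), φ ⟨γ, hK hγ⟩ = γ) (X : K) {B : Set ℝ}
    (hXB : Supp X ⊆ B) {u : ℝ ≃ₜ ℝ} (hu : u ∈ BSgroup n hn) (hd : Disjoint B (u '' B)) :
    Commute (φ X) (u * φ X * u⁻¹) := by
  rw [← map_conj hK hφ hu]
  exact commute_map_of_disjoint_Supp ((hd.mono hXB (image_mono hXB)).mono_right (Supp_conj u X).le)

lemma map_forall_notMem_apply_eq_or_forall_apply_ne (hK : BSgroup n hn ≤ K)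
    (hφ : ∀ γ (hγ : γ ∈ BSgroup n hn), φ ⟨γ, hK hγ⟩ = γ) (hmono : ∀ X, StrictMono (φ X))
    (X : K) (hX : IsCompact (Supp X)) : (∀ x ∉ Supp X, φ X x = x) ∨ ∀ x, φ X x ≠ x :=
  forall_notMem_apply_eq_or_forall_apply_ne hX (hmono X) fun _ hu hd =>
    commute_map_conj hK hφ X subset_rfl hu hd

/-- The quotient `(φ X)⁻¹ * (u * φ X * u⁻¹)` is the image of `X⁻¹ (u X u⁻¹)`, which has compact
support, so it is either fixed-point free or has bounded support; in the latter case it is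
trivial, as it commutes with `φ X`. -/
lemma conj_map_eq_or_forall_lt_or_forall_gt (hK : BSgroup n hn ≤ K)
    (hφ : ∀ γ (hγ : γ ∈ BSgroup n hn), φ ⟨γ, hK hγ⟩ = γ) (hmono : ∀ X, StrictMono (φ X))
    (X : K) (hX : IsCompact (Supp X)) (hlt : ∀ x, x < φ X x) {u : ℝ ≃ₜ ℝ}
    (hu : u ∈ BSgroup n hn) (hd : Disjoint (Supp X) (u '' Supp X)) :
    u * φ X * u⁻¹ = φ X ∨ (∀ x, (u * φ X * u⁻¹) x < φ X x) ∨ ∀ x, φ X x < (u * φ X * u⁻¹) x := by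
  set Y : K := X⁻¹ * (⟨u, hK hu⟩ * X * ⟨u, hK hu⟩⁻¹)
  have hφY : φ Y = (φ X)⁻¹ * (u * φ X * u⁻¹) := by rw [map_mul, map_inv, map_conj hK hφ hu]
  have hYX : Supp Y ⊆ Supp X ∪ u '' Supp X := by
    refine (Supp_mul_subset _ _).trans ?_
    rw [Subgroup.coe_inv, Supp_inv]
    exact union_subset_union_right _ (Supp_conj u X).le
  have hY : IsCompact (Supp Y) :=
    (hX.union (hX.image u.continuous)).of_isClosed_subset isClosed_closure hYX
  have hc := commute_map_conj hK hφ X subset_rfl hu hd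
  rcases map_forall_notMem_apply_eq_or_forall_apply_ne hK hφ hmono Y hY with hfix | hfree
  · left
    have := eq_one_of_commute_of_lt (hmono X) hlt (hφY ▸ ((Commute.refl _).inv_right.mul_right hc))
      (hY.bddAbove.mono (Supp_subset_of_forall_notMem isClosed_closure hfix))
    rw [hφY, inv_mul_eq_one] at this
    exact this.symm
  · right
    refine forall_lt_or_forall_lt (u * φ X * u⁻¹).continuous (φ X).continuous fun x hx => hfree x ?_
    rw [hφY, Homeomorph.mul_apply, hx, Homeomorph.inv_apply, Homeomorph.symm_apply_apply]

/-- Compare `φ X` with its conjugate by `y ↦ n y + s` at the fixed point `s / (1 - n)` of the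
latter. -/
lemma map_apply_lt_of_conj_dilation (hK : BSgroup n hn ≤ K)
    (hφ : ∀ γ (hγ : γ ∈ BSgroup n hn), φ ⟨γ, hK hγ⟩ = γ) (hmono : ∀ X, StrictMono (φ X))
    (X : K) (hX : IsCompact (Supp X)) (hlt : ∀ x, x < φ X x) {M : ℝ}
    (hXM : Supp X ⊆ Icc (-M) M) (s : ℝ) (hs : s ∈ adicRationals n) (hfar : (n + 1) * M < |s|)
    (y : ℝ) : φ X (n * y + s) < n * φ X y + s := by
  have hn' : (2 : ℝ) ≤ n := by exact_mod_cast hn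
  set z := s / (1 - n)
  have hzs : s = (1 - n) * z := by
    have : (1 : ℝ) - n ≠ 0 := by linarith
    simp only [z]
    field_simp
  have hz : (z - s) / n = z := by
    rw [div_eq_iff (by positivity), hzs]
    ring
  have hconj := conj_apply_affineHomeo (hn := hn) (φ X) 1 s
  have hpos : 0 < ((n : ℝ) - 1) * (φ X z - z) := mul_pos (by linarith) (sub_pos.2 (hlt z))
  rcases conj_map_eq_or_forall_lt_or_forall_gt hK hφ hmono X hX hlt (affineHomeo_mem (j := 1) hs)
    (disjoint_image_affineHomeo hXM (by simpa using hfar)) with heq | hbelow | habove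
  · have := congrArg (· z) heq
    simp only [hconj, zpow_one, hz] at this
    nlinarith
  · have := hbelow z
    simp only [hconj, zpow_one, hz] at this
    nlinarith
  · simpa [hconj, mul_div_cancel_left₀ _ (by positivity : (n : ℝ) ≠ 0)] using habove (n * y + s)

theorem exists_map_eq_add_of_lt (hK : BSgroup n hn ≤ K)
    (hφ : ∀ γ (hγ : γ ∈ BSgroup n hn), φ ⟨γ, hK hγ⟩ = γ) (hmono : ∀ X, StrictMono (φ X))
    (X : K) (hX : IsCompact (Supp X)) (hlt : ∀ x, x < φ X x) : ∃ t, ∀ x, φ X x = x + t := by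
  obtain ⟨M, hM, hXM⟩ := hX.exists_subset_Icc
  have hn' : (2 : ℝ) ≤ n := by exact_mod_cast hn
  have hfar : ∀ s : ℝ, (n + 1) * M < |s| → ((n : ℝ) ^ (0 : ℤ) + 1) * M < |s| := fun s hs => by
    rw [zpow_zero]; nlinarith
  refine exists_forall_eq_add (n := n) (by omega) (φ X).continuous hlt (C := (n + 1) * M)
    (by positivity) (map_apply_lt_of_conj_dilation hK hφ hmono X hX hlt hXM)
    (fun s hs hs' => ?_) (fun s hs hs' x => ?_)
  · have hconj := conj_apply_affineHomeo (hn := hn) (φ X) 0 s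
    refine (conj_map_eq_or_forall_lt_or_forall_gt hK hφ hmono X hX hlt (affineHomeo_mem hs)
      (disjoint_image_affineHomeo hXM (hfar s hs'))).imp (fun heq y => ?_)
      (Or.imp (fun hbelow y => ?_) (fun habove y => ?_))
    · simpa [hconj] using congrArg (· (y + s)) heq.symm
    · simpa [hconj] using hbelow (y + s)
    · simpa [hconj] using habove (y + s)
  · set w := affineHomeo n hn 0 s * φ X * (affineHomeo n hn 0 s)⁻¹
    have hw : ∀ z, w z = φ X (z - s) + s := fun z => by
      rw [conj_apply_affineHomeo]
      simp
    have := congrArg (· x) (commute_map_conj hK hφ X hXM (affineHomeo_mem (j := 0) hs)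
      (disjoint_image_affineHomeo Subset.rfl (hfar s hs'))).eq
    change φ X (w x) = w (φ X x) at this
    rwa [hw, hw] at this

/-- Take `u` squeezing `Supp X` next to `x`, and `v` squeezing it next to `y = φ X x` while
stretching `[x, y]` across `y`. Then `X (u X u⁻¹) X⁻¹` (supported near `X x`) and `v X v⁻¹`
(supported near `y`) commute, but their images do not: the first is supported near `y`, and the
second pushes that region off itself. -/
lemma false_of_lt_of_map_apply_ne (hK : BSgroup n hn ≤ K)
    (hφ : ∀ γ (hγ : γ ∈ BSgroup n hn), φ ⟨γ, hK hγ⟩ = γ) (hmono : ∀ X, StrictMono (φ X))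
    (X : K) (hX : IsCompact (Supp X)) (hfix : ∀ x ∉ Supp X, φ X x = x) {x : ℝ}
    (hx : x < φ X x) (hne : φ X x ≠ (X : ℝ ≃ₜ ℝ) x) : False := by
  set f : ℝ ≃ₜ ℝ := (X : ℝ ≃ₜ ℝ)
  obtain ⟨M, -, hXM⟩ := hX.exists_subset_Icc
  have hρ : 0 < dist (φ X x) (f x) := dist_pos.2 hne
  obtain ⟨v, hv, hvmono, r, hr, hvx, hvy, hvM⟩ :=
    exists_mem_BSgroup_straddle hn hx M (half_pos hρ)
  obtain ⟨δ, hδ, hδh, hδf⟩ : ∃ δ > 0, (∀ w, dist w x < δ → dist (φ X w) (φ X x) < r) ∧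
      ∀ w, dist w x < δ → dist (f w) (f x) < dist (φ X x) (f x) / 2 := by
    obtain ⟨δ₁, hδ₁, h₁⟩ := Metric.continuous_iff.1 (φ X).continuous x r hr
    obtain ⟨δ₂, hδ₂, h₂⟩ := Metric.continuous_iff.1 f.continuous x _ (half_pos hρ)
    exact ⟨min δ₁ δ₂, lt_min hδ₁ hδ₂, fun w hw => h₁ w (hw.trans_le (min_le_left _ _)),
      fun w hw => h₂ w (hw.trans_le (min_le_right _ _))⟩
  obtain ⟨u, hu, -, -, -, -, -, huM⟩ := exists_mem_BSgroup_straddle hn (sub_one_lt x) M hδ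
  have hd : Disjoint (Supp ((X * (⟨u, hK hu⟩ * X * ⟨u, hK hu⟩⁻¹) * X⁻¹ : K) : ℝ ≃ₜ ℝ))
      (Supp ((⟨v, hK hv⟩ * X * ⟨v, hK hv⟩⁻¹ : K) : ℝ ≃ₜ ℝ)) := by
    refine (Metric.ball_disjoint_ball (x := f x) (y := φ X x) (δ := dist (φ X x) (f x) / 2)
      (ε := dist (φ X x) (f x) / 2) (by rw [dist_comm]; linarith)).mono ?_ ?_
    · refine ((Supp_conj f _).trans (congrArg _ (Supp_conj u f))).le.trans ?_
      rintro _ ⟨_, ⟨b, hb, rfl⟩, rfl⟩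
      exact hδf _ (huM ⟨b, hXM hb, rfl⟩)
    · exact (Supp_conj v f).le.trans ((image_mono hXM).trans hvM)
  have hc := commute_map_of_disjoint_Supp (φ := φ) hd
  rw [map_mul, map_mul, map_inv, map_conj hK hφ hu, map_conj hK hφ hv] at hc
  have hsupp : Supp (φ X * (u * φ X * u⁻¹) * (φ X)⁻¹) ⊆ Metric.ball (φ X x) r := by
    rw [Supp_conj, Supp_conj]
    rintro _ ⟨_, ⟨b, hb, rfl⟩, rfl⟩
    exact hδh _ (huM ⟨b, hXM (Supp_subset_of_forall_notMem isClosed_closure hfix hb), rfl⟩)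
  have hpush : ∀ z ∈ Metric.ball (φ X x) r, φ X x + r < (v * φ X * v⁻¹) z := fun z hz => by
    have hz' := (abs_sub_lt_iff.1 (Metric.mem_ball.1 hz)).2
    have hxz : x < v⁻¹ z := hvmono.lt_iff_lt.1 (by
      rw [Homeomorph.inv_apply, v.apply_symm_apply]; linarith)
    exact hvy.trans (hvmono (hmono X hxz))
  have := eq_one_of_commute_of_disjoint_image hc.symm (Set.disjoint_right.2 ?_)
  · rw [conj_eq_one_iff, conj_eq_one_iff] at this
    exact hx.ne (by rw [this]; rfl)
  · rintro _ ⟨z, hz, rfl⟩ hz'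
    have h₁ := hpush z (hsupp hz)
    have h₂ := (abs_sub_lt_iff.1 (Metric.mem_ball.1 (hsupp hz'))).1
    linarith

lemma map_apply_eq_self_or_eq (hK : BSgroup n hn ≤ K)
    (hφ : ∀ γ (hγ : γ ∈ BSgroup n hn), φ ⟨γ, hK hγ⟩ = γ) (hmono : ∀ X, StrictMono (φ X))
    (X : K) (hX : IsCompact (Supp X)) (hfix : ∀ x ∉ Supp X, φ X x = x) (x : ℝ) :
    φ X x = x ∨ φ X x = (X : ℝ ≃ₜ ℝ) x := by
  by_contra! ⟨hx, hne⟩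
  rcases hx.lt_or_gt with hlt | hgt
  · have hXinv : Supp (X⁻¹ : K) = Supp X := by rw [Subgroup.coe_inv, Supp_inv]
    refine false_of_lt_of_map_apply_ne hK hφ hmono X⁻¹ (hXinv ▸ hX) (fun y hy => ?_)
      (x := φ X x) ?_ ?_
    · rw [map_inv, Homeomorph.inv_apply, Homeomorph.symm_apply_eq, hfix y (hXinv ▸ hy)]
    · simpa using hlt
    · rw [map_inv, Homeomorph.inv_apply, Homeomorph.symm_apply_apply, Subgroup.coe_inv,
        Homeomorph.inv_apply, ne_eq, Homeomorph.eq_symm_apply]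
      exact hne.symm
  · exact false_of_lt_of_map_apply_ne hK hφ hmono X hX hfix hgt hne

end Transfer

theorem BS_hom_recognition_general
    (n : ℕ) (hn : 2 ≤ n) (f h : ℝ ≃ₜ ℝ)
    (hfc : IsCompact (Supp f))
    (φ : Subgroup.closure ((BSgroup n hn : Set (ℝ ≃ₜ ℝ)) ∪ {f}) →* (ℝ ≃ₜ ℝ))
    (hφmono : ∀ g, StrictMono (φ g))
    (hφΓ : ∀ (γ : ℝ ≃ₜ ℝ) (hγ : γ ∈ BSgroup n hn),
      φ ⟨γ, Subgroup.subset_closure (Set.mem_union_left _ hγ)⟩ = γ)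
    (hφf : φ ⟨f, Subgroup.subset_closure
        (Set.mem_union_right _ (Set.mem_singleton f))⟩ = h) :
    (∃ t : ℝ, ∀ x : ℝ, h x = x + t) ∨ (∀ x : ℝ, h x = x ∨ h x = f x) := by
  have hK : BSgroup n hn ≤ Subgroup.closure ((BSgroup n hn : Set (ℝ ≃ₜ ℝ)) ∪ {f}) :=
    fun _ hγ => Subgroup.subset_closure (Set.mem_union_left _ hγ)
  subst hφf
  set F : Subgroup.closure ((BSgroup n hn : Set (ℝ ≃ₜ ℝ)) ∪ {f}) :=
    ⟨f, Subgroup.subset_closure (Set.mem_union_right _ (Set.mem_singleton f))⟩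
  rcases map_forall_notMem_apply_eq_or_forall_apply_ne hK hφΓ hφmono F hfc with hfix | hfree
  · exact Or.inr (map_apply_eq_self_or_eq hK hφΓ hφmono F hfc hfix)
  left
  rcases forall_lt_or_forall_lt continuous_id (φ F).continuous fun x hx => hfree x hx.symm
    with hup | hdown
  · exact exists_map_eq_add_of_lt hK hφΓ hφmono F hfc hup
  · obtain ⟨t, ht⟩ := exists_map_eq_add_of_lt hK hφΓ hφmono F⁻¹
      (by rwa [Subgroup.coe_inv, Supp_inv]) fun x => by
        simpa using hdown ((φ F)⁻¹ x)
    refine ⟨-t, fun x => ?_⟩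
    have := ht (φ F x)
    rw [map_inv, Homeomorph.inv_apply, Homeomorph.symm_apply_apply] at this
    linarith

theorem BS_hom_recognition
    (n : ℕ) (hn : 2 ≤ n) (f h : ℝ ≃ₜ ℝ)
    (hfmono : StrictMono f) (hhmono : StrictMono h)
    (hfc : IsCompact (Supp f))
    (φ : Subgroup.closure ((BSgroup n hn : Set (ℝ ≃ₜ ℝ)) ∪ {f}) →* (ℝ ≃ₜ ℝ))
    (hφmono : ∀ g, StrictMono (φ g))
    (hφΓ : ∀ (γ : ℝ ≃ₜ ℝ) (hγ : γ ∈ BSgroup n hn),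
      φ ⟨γ, Subgroup.subset_closure (Set.mem_union_left _ hγ)⟩ = γ)
    (hφf : φ ⟨f, Subgroup.subset_closure
        (Set.mem_union_right _ (Set.mem_singleton f))⟩ = h) :
    (∃ t : ℝ, ∀ x : ℝ, h x = x + t) ∨ (∀ x : ℝ, h x = x ∨ h x = f x) :=
  BS_hom_recognition_general n hn f h hfc φ hφmono hφΓ hφf
end

section
/- Fix an integer n ≥ 2. Let h ∈ Homeo₊(ℝ) and suppose there exists a compact set K ⊆ ℝ such that h commutes with u ∘ h ∘ u⁻¹ for every u ∈ BS(1,n) with u(K) ∩ K = ∅. Suppose there exists a real number t₀ ≠ 0 such that either h(x) = x + t₀ for all sufficiently large x (i.e. there is C with h(x) = x + t₀ for all x ≥ C), or h(x) = x + t₀ for all sufficiently negative x. Then h(x) = x + t₀ for every x ∈ ℝ. -/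
open Set Topology

/-!
Integer translations lie in `BS(1,n)`, and those by a large enough integer `m` move `K` off
itself, so for all but finitely many `m` the map `h` commutes with `x ↦ h (x - m) + m`, i.e.
`h (h (x - m) + m) = h (h x - m) + m`. Pushing `m` towards the end where `h` is the translation by
`t₀`, both inner values of `h` become explicit and the identity reads `h (x + t₀) = h x + t₀`.
Thus `h x - x` is `t₀`-periodic and equal to `t₀` near one end of `ℝ`, hence everywhere.
-/

open Filter Function

theorem translation_apply (t x : ℝ) : translation t x = x + t := rfl

theorem translation_zero : translation 0 = 1 :=
  Homeomorph.ext add_zero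

theorem translation_mul (s t : ℝ) : translation s * translation t = translation (s + t) :=
  Homeomorph.ext fun x => show x + t + s = x + (s + t) by ring

theorem translation_inv (t : ℝ) : (translation t)⁻¹ = translation (-t) :=
  Homeomorph.ext fun x => sub_eq_add_neg x t

theorem translation_one_zpow (k : ℤ) : translation 1 ^ k = translation k := by
  induction k using Int.induction_on with
  | zero => rw [zpow_zero, Int.cast_zero, translation_zero]
  | succ k ih => rw [zpow_add_one, ih, translation_mul]; push_cast; rfl
  | pred k ih => rw [zpow_sub_one, ih, translation_inv, translation_mul]; push_cast; ring_nf

theorem translation_intCast_mem_BSgroup (n : ℕ) (hn : 2 ≤ n) (k : ℤ) :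
    translation k ∈ BSgroup n hn :=
  translation_one_zpow k ▸ Subgroup.zpow_mem _ (Subgroup.subset_closure (by simp)) k

theorem eventually_image_translation_inter_eq_empty {K : Set ℝ} (hK : Bornology.IsBounded K) :
    ∀ᶠ t in cocompact ℝ, translation t '' K ∩ K = ∅ := by
  obtain ⟨C, hC⟩ := Metric.isBounded_iff.1 hK
  filter_upwards [tendsto_norm_cocompact_atTop.eventually_gt_atTop C] with t ht
  refine eq_empty_iff_forall_notMem.2 ?_
  rintro _ ⟨⟨z, hz, rfl⟩, hzt⟩
  have := hC hzt hz
  rw [translation_apply, dist_eq_norm, add_sub_cancel_left] at this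
  exact this.not_gt ht

theorem Commute.conj_translation_apply {f : ℝ ≃ₜ ℝ} {t : ℝ}
    (hf : Commute f (translation t * f * (translation t)⁻¹)) (x : ℝ) :
    f (f (x - t) + t) = f (f x - t) + t :=
  DFunLike.congr_fun hf x

section Periodic

variable {α β : Type*} [AddCommGroup α] [LinearOrder α] [IsOrderedAddMonoid α] [Archimedean α]
  {φ : α → β} {c : α} {b : β}

theorem Function.Periodic.eq_of_eventually_eq_atTop (hφ : Periodic φ c) (hc : c ≠ 0)
    (hb : ∀ᶠ x in atTop, φ x = b) (x : α) : φ x = b := by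
  wlog hpos : 0 < c
  · exact this hφ.neg (neg_ne_zero.2 hc) hb x (neg_pos.2 (hc.lt_of_le (not_lt.1 hpos)))
  obtain ⟨C, hC⟩ := eventually_atTop.1 hb
  obtain ⟨y, hy, hxy⟩ := hφ.exists_mem_Ico hpos x C
  exact hxy.trans (hC y hy.1)

theorem Function.Periodic.eq_of_eventually_eq_atBot (hφ : Periodic φ c) (hc : c ≠ 0)
    (hb : ∀ᶠ x in atBot, φ x = b) (x : α) : φ x = b := by
  wlog hpos : 0 < c
  · exact this hφ.neg (neg_ne_zero.2 hc) hb x (neg_pos.2 (hc.lt_of_le (not_lt.1 hpos)))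
  obtain ⟨C, hC⟩ := eventually_atBot.1 hb
  obtain ⟨y, hy, hxy⟩ := hφ.exists_mem_Ioc hpos x (C - c)
  exact hxy.trans (hC y (sub_add_cancel C c ▸ hy.2))

end Periodic

theorem tendsto_sub_intCast_atBot_atTop (y : ℝ) :
    Tendsto (fun m : ℤ => y - (m : ℝ)) atBot atTop :=
  (tendsto_atTop_add_const_left _ y (tendsto_neg_atBot_atTop.comp
    (tendsto_intCast_atBot_iff.2 tendsto_id))).congr fun m => (sub_eq_add_neg y m).symm

theorem tendsto_sub_intCast_atTop_atBot (y : ℝ) :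
    Tendsto (fun m : ℤ => y - (m : ℝ)) atTop atBot :=
  (tendsto_atBot_add_const_left _ y (tendsto_neg_atTop_atBot.comp
    (tendsto_intCast_atTop_iff.2 tendsto_id))).congr fun m => (sub_eq_add_neg y m).symm

theorem periodic_sub_id_of_conj_translates {f : ℝ → ℝ} {t : ℝ} {l : Filter ℝ}
    {L : Filter ℤ} [L.NeBot] (hL : L ≤ cofinite)
    (hshift : ∀ y, Tendsto (fun m : ℤ => y - (m : ℝ)) L l)
    (hconj : ∀ᶠ m : ℤ in cofinite, ∀ x, f (f (x - m) + m) = f (f x - m) + m)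
    (hgerm : ∀ᶠ y in l, f y = y + t) : Periodic (fun x => f x - x) t := by
  intro x
  obtain ⟨m, hm, hx, hfx⟩ := ((hconj.filter_mono hL).and <|
    ((hshift x).eventually hgerm).and ((hshift (f x)).eventually hgerm)).exists
  have : f (x + t) = f x + t :=
    calc f (x + t) = f (f (x - m) + m) := by rw [hx]; ring_nf
      _ = f (f x - m) + m := hm x
      _ = f x + t := by rw [hfx]; ring
  simp only [this]; ring

theorem translation_germ_implies_translation_general
    (n : ℕ) (hn : 2 ≤ n) (h : ℝ ≃ₜ ℝ)
    (hK : ∃ K : Set ℝ, IsCompact K ∧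
      ∀ u ∈ BSgroup n hn, (u '' K) ∩ K = ∅ → Commute h (u * h * u⁻¹))
    (t₀ : ℝ) (ht₀ : t₀ ≠ 0)
    (hgerm : (∃ C : ℝ, ∀ x : ℝ, C ≤ x → h x = x + t₀) ∨
             (∃ C : ℝ, ∀ x : ℝ, x ≤ C → h x = x + t₀)) :
    ∀ x : ℝ, h x = x + t₀ := by
  obtain ⟨K, hKc, hcomm⟩ := hK
  have hconj : ∀ᶠ m : ℤ in cofinite, ∀ x, h (h (x - m) + m) = h (h x - m) + m :=
    (Int.tendsto_coe_cofinite.eventually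
      (eventually_image_translation_inter_eq_empty hKc.isBounded)).mono fun m hm =>
        (hcomm _ (translation_intCast_mem_BSgroup n hn m) hm).conj_translation_apply
  intro x
  rw [← sub_eq_iff_eq_add']
  rcases hgerm with hgerm | hgerm
  · have hgerm := eventually_atTop.2 hgerm
    exact (periodic_sub_id_of_conj_translates (Int.cofinite_eq ▸ le_sup_left)
      tendsto_sub_intCast_atBot_atTop hconj hgerm).eq_of_eventually_eq_atTop ht₀
      (hgerm.mono fun y hy => by rw [hy, add_sub_cancel_left]) x
  · have hgerm := eventually_atBot.2 hgerm
    exact (periodic_sub_id_of_conj_translates (Int.cofinite_eq ▸ le_sup_right)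
      tendsto_sub_intCast_atTop_atBot hconj hgerm).eq_of_eventually_eq_atBot ht₀
      (hgerm.mono fun y hy => by rw [hy, add_sub_cancel_left]) x

theorem translation_germ_implies_translation
    (n : ℕ) (hn : 2 ≤ n) (h : ℝ ≃ₜ ℝ) (hhmono : StrictMono h)
    (hK : ∃ K : Set ℝ, IsCompact K ∧
      ∀ u ∈ BSgroup n hn, (u '' K) ∩ K = ∅ → Commute h (u * h * u⁻¹))
    (t₀ : ℝ) (ht₀ : t₀ ≠ 0)
    (hgerm : (∃ C : ℝ, ∀ x : ℝ, C ≤ x → h x = x + t₀) ∨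
             (∃ C : ℝ, ∀ x : ℝ, x ≤ C → h x = x + t₀)) :
    ∀ x : ℝ, h x = x + t₀ :=
  translation_germ_implies_translation_general n hn h hK t₀ ht₀ hgerm
end
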